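/- If the domain of preference profiles satisfies top dominance for women, then the men-proposing deferred acceptance rule restricted to this domain is stable and group strategy-proof: no profile in the domain, coalition of agents, and joint misreport within the domain can make every coalition member strictly better off. -/

import Mathlib

/-- A one-to-one matching between men `M` and women `W`; `none` means unmatched. -/
structure Matching (M W : Type*) where
  menMatch : M → Option W
  womenMatch : W → Option M
  consistent : ∀ m w, menMatch m = some w ↔ womenMatch w = some m

/-- A preference profile: each man has a strict linear order over `W ∪ {∅}`
(encoded as `Option W`, with `none` the outside option), and each woman over `M ∪ {∅}`. -/
structure Profile (M W : Type*) where
  menPref : M → LinearOrder (Option W)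
  womenPref : W → LinearOrder (Option M)

variable {M W : Type*}

def IndividuallyRational (μ : Matching M W) (P : Profile M W) : Prop :=
  (∀ m, (P.menPref m).le none (μ.menMatch m)) ∧
  (∀ w, (P.womenPref w).le none (μ.womenMatch w))

def Blocks (m : M) (w : W) (μ : Matching M W) (P : Profile M W) : Prop :=
  (P.menPref m).lt (μ.menMatch m) (some w) ∧
  (P.womenPref w).lt (μ.womenMatch w) (some m)

def Stable (μ : Matching M W) (P : Profile M W) : Prop :=
  IndividuallyRational μ P ∧ ∀ m w, ¬ Blocks m w μ P

/-- The men-optimal stable matching: stable, and every man weakly prefers it to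
any stable matching.  This characterizes the outcome of the men-proposing
deferred acceptance (MPDA) algorithm. -/
def MenOptimalStable (μ : Matching M W) (P : Profile M W) : Prop :=
  Stable μ P ∧
    ∀ ν : Matching M W, Stable ν P → ∀ m, (P.menPref m).le (ν.menMatch m) (μ.menMatch m)

/-- The women-optimal stable matching, i.e. the outcome of women-proposing DA. -/
def WomenOptimalStable (μ : Matching M W) (P : Profile M W) : Prop :=
  Stable μ P ∧
    ∀ ν : Matching M W, Stable ν P → ∀ w, (P.womenPref w).le (ν.womenMatch w) (μ.womenMatch w)

def Matching.empty (M W : Type*) : Matching M W :=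
  ⟨fun _ => none, fun _ => none, by intro m w; simp⟩

/-- The men-proposing deferred acceptance rule `D^M`. -/
noncomputable def mpda (P : Profile M W) : Matching M W :=
  letI := Classical.dec (∃ μ : Matching M W, MenOptimalStable μ P)
  if h : ∃ μ : Matching M W, MenOptimalStable μ P then h.choose else Matching.empty M W

/-- The women-proposing deferred acceptance rule `D^W`. -/
noncomputable def wpda (P : Profile M W) : Matching M W :=
  letI := Classical.dec (∃ μ : Matching M W, WomenOptimalStable μ P)
  if h : ∃ μ : Matching M W, WomenOptimalStable μ P then h.choose else Matching.empty M W

/-- A domain of preference profiles: a set of admissible preferences for each agent. -/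
structure Domain (M W : Type*) where
  men : M → Set (LinearOrder (Option W))
  women : W → Set (LinearOrder (Option M))

/-- Membership of a profile in (the product domain generated by) a domain. -/
def Domain.mem (D : Domain M W) (P : Profile M W) : Prop :=
  (∀ m, P.menPref m ∈ D.men m) ∧ (∀ w, P.womenPref w ∈ D.women w)

def Profile.updateMan [DecidableEq M] (P : Profile M W) (m : M)
    (p : LinearOrder (Option W)) : Profile M W :=
  ⟨Function.update P.menPref m p, P.womenPref⟩

def Profile.updateWoman [DecidableEq W] (P : Profile M W) (w : W)
    (p : LinearOrder (Option M)) : Profile M W :=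
  ⟨P.menPref, Function.update P.womenPref w p⟩

/-- A matching rule is stable on a domain if it selects a stable matching at
every profile of the domain. -/
def StableOn (D : Domain M W) (φ : Profile M W → Matching M W) : Prop :=
  ∀ P, D.mem P → Stable (φ P) P

/-- Strategy-proofness on a domain: no single agent can strictly gain by
misreporting an admissible preference. -/
def StrategyProofOn [DecidableEq M] [DecidableEq W] (D : Domain M W)
    (φ : Profile M W → Matching M W) : Prop :=
  ∀ P, D.mem P →
    (∀ m p, p ∈ D.men m →
      (P.menPref m).le ((φ (P.updateMan m p)).menMatch m) ((φ P).menMatch m)) ∧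
    (∀ w p, p ∈ D.women w →
      (P.womenPref w).le ((φ (P.updateWoman w p)).womenMatch w) ((φ P).womenMatch w))

/-- A coalition `(Sm, Sw)` manipulates `φ` at `P` via the admissible profile `Q`
(which agrees with `P` outside the coalition): every coalition member is
strictly better off at `φ Q` than at `φ P` according to true preferences. -/
def Manipulation (D : Domain M W) (φ : Profile M W → Matching M W)
    (P Q : Profile M W) (Sm : Set M) (Sw : Set W) : Prop :=
  D.mem P ∧ D.mem Q ∧
  (∀ m ∉ Sm, Q.menPref m = P.menPref m) ∧
  (∀ w ∉ Sw, Q.womenPref w = P.womenPref w) ∧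
  (∀ m ∈ Sm, (P.menPref m).lt ((φ P).menMatch m) ((φ Q).menMatch m)) ∧
  (∀ w ∈ Sw, (P.womenPref w).lt ((φ P).womenMatch w) ((φ Q).womenMatch w))

/-- Group strategy-proofness on a domain: no nonempty coalition can manipulate. -/
def GroupStrategyProofOn (D : Domain M W) (φ : Profile M W → Matching M W) : Prop :=
  ¬ ∃ (P Q : Profile M W) (Sm : Set M) (Sw : Set W),
      (Sm.Nonempty ∨ Sw.Nonempty) ∧ Manipulation D φ P Q Sm Sw

/-- Top dominance for women. -/
def TopDominanceWomen (D : Domain M W) : Prop :=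
  ∀ w : W, ∀ x : M, ∀ y z : Option M,
    (∃ P ∈ D.women w, P.lt y (some x) ∧ P.lt z y ∧ P.le none y) →
      ¬ ∃ P' ∈ D.women w, P'.lt z (some x) ∧ P'.lt y z ∧ P'.le none z

/-- Top dominance for men. -/
def TopDominanceMen (D : Domain M W) : Prop :=
  ∀ m : M, ∀ x : W, ∀ y z : Option W,
    (∃ P ∈ D.men m, P.lt y (some x) ∧ P.lt z y ∧ P.le none y) →
      ¬ ∃ P' ∈ D.men m, P'.lt z (some x) ∧ P'.lt y z ∧ P'.le none z

/-- Unrestricted top pairs for men. -/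
def UnrestrictedTopPairsMen (D : Domain M W) : Prop :=
  ∀ m : M,
    (∀ w w' : W, w ≠ w' → ∃ P ∈ D.men m, P.lt (some w') (some w) ∧
        ∀ z : Option W, z ≠ some w → z ≠ some w' → P.lt z (some w')) ∧
    (∀ w : W, ∃ P ∈ D.men m, P.lt none (some w) ∧
        ∀ z : Option W, z ≠ some w → z ≠ none → P.lt z none) ∧
    (∃ P ∈ D.men m, ∀ z : Option W, z ≠ none → P.lt z none)

/-- Unrestricted top pairs for women. -/
def UnrestrictedTopPairsWomen (D : Domain M W) : Prop :=
  ∀ w : W,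
    (∀ m m' : M, m ≠ m' → ∃ P ∈ D.women w, P.lt (some m') (some m) ∧
        ∀ z : Option M, z ≠ some m → z ≠ some m' → P.lt z (some m')) ∧
    (∀ m : M, ∃ P ∈ D.women w, P.lt none (some m) ∧
        ∀ z : Option M, z ≠ some m → z ≠ none → P.lt z none) ∧
    (∃ P ∈ D.women w, ∀ z : Option M, z ≠ none → P.lt z none)

/-- Single-peakedness of a preference over `Option α` with respect to a prior
order `ord` on `α`:  moving away from the peak (the most preferred element of
`α`) on either side makes the preference decline. -/
def SinglePeaked {α : Type*} (ord : LinearOrder α) (P : LinearOrder (Option α)) : Prop :=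
  ∀ peak : α, (∀ a : α, P.le (some a) (some peak)) →
    ∀ a b : α, ((ord.le peak a ∧ ord.lt a b) ∨ (ord.lt b a ∧ ord.le a peak)) →
      P.lt (some b) (some a)

/-- The maximal single-peaked domain with respect to orders on men and women. -/
def maximalSinglePeakedDomain (ordM : LinearOrder M) (ordW : LinearOrder W) : Domain M W :=
  ⟨fun _ => {P | SinglePeaked ordW P}, fun _ => {P | SinglePeaked ordM P}⟩

/-- A domain is single-peaked if all admissible preferences are single-peaked. -/
def Domain.SinglePeakedDomain (D : Domain M W) (ordM : LinearOrder M)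
    (ordW : LinearOrder W) : Prop :=
  (∀ m, ∀ P ∈ D.men m, SinglePeaked ordW P) ∧ (∀ w, ∀ P ∈ D.women w, SinglePeaked ordM P)

/-- Anonymity: all men share the same admissible set, and all women do too. -/
def Domain.Anonymous (D : Domain M W) : Prop :=
  (∀ m m' : M, D.men m = D.men m') ∧ (∀ w w' : W, D.women w = D.women w')

/-- Cyclical inclusion for men. -/
def CyclicalInclusionMen (D : Domain M W) : Prop :=
  ∀ m : M,
    (∃ P ∈ D.men m, ∀ z : Option W, z ≠ none → P.lt z none) ∧
    (∀ w w' : W,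
      (∃ P ∈ D.men m, P.lt (some w') (some w) ∧ P.lt none (some w')) →
      (∃ P ∈ D.men m, P.lt (some w) (some w') ∧ P.lt none (some w)))

/-- Cyclical inclusion for women. -/
def CyclicalInclusionWomen (D : Domain M W) : Prop :=
  ∀ w : W,
    (∃ P ∈ D.women w, ∀ z : Option M, z ≠ none → P.lt z none) ∧
    (∀ m m' : M,
      (∃ P ∈ D.women w, P.lt (some m') (some m) ∧ P.lt none (some m')) →
      (∃ P ∈ D.women w, P.lt (some m) (some m') ∧ P.lt none (some m)))

/-- The unrestricted domain: every strict linear order is admissible. -/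
def fullDomain (M W : Type*) : Domain M W :=
  ⟨fun _ => Set.univ, fun _ => Set.univ⟩

/-! Men-proposing deferred acceptance yields the men-optimal stable matching `μ = mpda P`, and
the blocking lemma of Gale and Sotomayor holds for it. Suppose a coalition gains by reporting `Q`,
and let `ν = mpda Q`. If some man strictly gains, the blocking lemma gives a pair `(m, w)` blocking
`ν` with `m` outside the set of gaining men and `w` matched by `ν` to a gaining man; neither can
be in the coalition, so the pair also blocks `ν` at `Q`. Hence no man gains, the coalition
consists of women, and top dominance forbids them from reversing, at `Q`, the comparisons on which
the stability of `μ` at `P` rests: `μ` is stable at `Q`. Men-optimality of `ν` at `Q` then forces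
`ν = μ`, so nobody gains. -/

section Order

/- Preferences are `LinearOrder` values rather than instances; these restatements make the order
lemmas available through dot notation on them. -/

variable {α : Type*}

protected theorem LinearOrder.lt_irrefl (L : LinearOrder α) (a : α) : ¬ L.lt a a :=
  letI := L; lt_irrefl a

protected theorem LinearOrder.lt_asymm (L : LinearOrder α) {a b : α} (h : L.lt a b) :
    ¬ L.lt b a :=
  letI := L; lt_asymm h

protected theorem LinearOrder.le_of_lt (L : LinearOrder α) {a b : α} (h : L.lt a b) : L.le a b :=
  letI := L; le_of_lt h

protected theorem LinearOrder.lt_of_le_of_lt (L : LinearOrder α) {a b c : α} (h : L.le a b)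
    (h' : L.lt b c) : L.lt a c :=
  letI := L; lt_of_le_of_lt h h'

protected theorem LinearOrder.lt_of_lt_of_le (L : LinearOrder α) {a b c : α} (h : L.lt a b)
    (h' : L.le b c) : L.lt a c :=
  letI := L; lt_of_lt_of_le h h'

protected theorem LinearOrder.lt_of_le_of_ne (L : LinearOrder α) {a b : α} (h : L.le a b)
    (h' : a ≠ b) : L.lt a b :=
  letI := L; lt_of_le_of_ne h h'

protected theorem LinearOrder.not_lt (L : LinearOrder α) {a b : α} : ¬ L.lt a b ↔ L.le b a :=
  letI := L; not_lt

theorem exists_eq_some_of_none_le_of_lt {L : LinearOrder (Option α)} {a b : Option α}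
    (ha : L.le none a) (hab : L.lt a b) : ∃ x, b = some x := by
  cases b with
  | none => exact absurd (L.lt_of_le_of_lt ha hab) (L.lt_irrefl none)
  | some x => exact ⟨x, rfl⟩

theorem exists_last_entry {s : ℕ → Finset α} (h0 : s 0 = ∅) {E : Finset α} (hE : E.Nonempty)
    {N : ℕ} (hN : E ⊆ s N) : ∃ k < N, E ⊆ s (k + 1) ∧ ¬ E ⊆ s k := by
  classical
  have hex : ∃ n, E ⊆ s n := ⟨N, hN⟩
  obtain ⟨k, hk⟩ : ∃ k, Nat.find hex = k + 1 := Nat.exists_eq_succ_of_ne_zero fun h => by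
    have h' := Nat.find_spec hex
    rw [h, h0] at h'
    exact hE.ne_empty (Finset.subset_empty.1 h')
  refine ⟨k, by have := Nat.find_min' hex hN; omega, hk ▸ Nat.find_spec hex, ?_⟩
  exact Nat.find_min hex (by omega)

end Order

namespace Matching

theorem womenMatch_eq_some {μ : Matching M W} {m : M} {w : W} :
    μ.womenMatch w = some m ↔ μ.menMatch m = some w :=
  (μ.consistent m w).symm

theorem menMatch_injective {μ : Matching M W} {m m' : M} {w : W} (h : μ.menMatch m = some w)
    (h' : μ.menMatch m' = some w) : m = m' :=
  Option.some_injective _ <| (μ.consistent m w).1 h ▸ (μ.consistent m' w).1 h'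

theorem ext_menMatch {μ ν : Matching M W} (h : ∀ m, μ.menMatch m = ν.menMatch m) : μ = ν := by
  obtain ⟨μm, μw, hμ⟩ := μ
  obtain ⟨νm, νw, hν⟩ := ν
  obtain rfl : μm = νm := funext h
  obtain rfl : μw = νw := funext fun w => Option.ext fun m => (hμ m w).symm.trans (hν m w)
  rfl

end Matching

section Stability

variable {μ : Matching M W} {P : Profile M W}

theorem Stable.lt_womenMatch (hμ : Stable μ P) {m : M} {w : W}
    (h : (P.menPref m).lt (μ.menMatch m) (some w)) :
    (P.womenPref w).lt (some m) (μ.womenMatch w) := by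
  refine (P.womenPref w).lt_of_le_of_ne ((P.womenPref w).not_lt.1 fun hw => hμ.2 m w ⟨h, hw⟩) ?_
  intro hmw
  rw [(μ.consistent m w).2 hmw.symm] at h
  exact (P.menPref m).lt_irrefl _ h

theorem MenOptimalStable.unique {μ' : Matching M W} (hμ : MenOptimalStable μ P)
    (hμ' : MenOptimalStable μ' P) : μ = μ' :=
  Matching.ext_menMatch fun m => (P.menPref m).le_antisymm _ _ (hμ'.2 μ hμ.1 m) (hμ.2 μ' hμ'.1 m)

end Stability

namespace DeferredAcceptance

open Finset
open scoped Classical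

variable [Fintype W] (P : Profile M W)

noncomputable def available (R : Finset (M × W)) (m : M) : Finset (Option W) :=
  univ.filter fun o => ∀ w ∈ o, (m, w) ∉ R

theorem mem_available {R : Finset (M × W)} {m : M} {o : Option W} :
    o ∈ available R m ↔ ∀ w ∈ o, (m, w) ∉ R := by
  simp [available]

theorem none_mem_available (R : Finset (M × W)) (m : M) : none ∈ available R m := by
  simp [mem_available]

theorem some_mem_available {R : Finset (M × W)} {m : M} {w : W} :
    some w ∈ available R m ↔ (m, w) ∉ R := by
  simp [mem_available]

theorem available_anti {R R' : Finset (M × W)} (h : R ⊆ R') (m : M) :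
    available R' m ⊆ available R m := fun _ ho =>
  mem_available.2 fun w hw hR => mem_available.1 ho w hw (h hR)

noncomputable def proposal (R : Finset (M × W)) (m : M) : Option W :=
  @Finset.max' _ (P.menPref m) (available R m) ⟨none, none_mem_available R m⟩

variable {P} {R R' : Finset (M × W)} {m : M} {w : W}

theorem proposal_mem_available : proposal P R m ∈ available R m :=
  @Finset.max'_mem _ (P.menPref m) _ _

theorem le_proposal {o : Option W} (h : o ∈ available R m) :
    (P.menPref m).le o (proposal P R m) :=
  @Finset.le_max' _ (P.menPref m) _ _ h

theorem none_le_proposal : (P.menPref m).le none (proposal P R m) :=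
  le_proposal (none_mem_available R m)

theorem not_mem_of_proposal_eq (h : proposal P R m = some w) : (m, w) ∉ R :=
  some_mem_available.1 (h ▸ proposal_mem_available)

theorem mem_of_lt_proposal (h : (P.menPref m).lt (proposal P R m) (some w)) : (m, w) ∈ R := by
  by_contra hR
  exact (P.menPref m).not_lt.2 (le_proposal (some_mem_available.2 hR)) h

theorem proposal_anti (h : R ⊆ R') : (P.menPref m).le (proposal P R' m) (proposal P R m) :=
  le_proposal (available_anti h m proposal_mem_available)

variable [Fintype M] (P)

noncomputable def proposers (R : Finset (M × W)) (w : W) : Finset (Option M) :=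
  univ.filter fun o => ∀ m ∈ o, proposal P R m = some w

noncomputable def held (R : Finset (M × W)) (w : W) : Option M :=
  @Finset.max' _ (P.womenPref w) (proposers P R w) ⟨none, by simp [proposers]⟩

/-- One round: every man proposes to his best option not yet rejected, and every woman rejects
all proposers but the one she holds. -/
noncomputable def step (R : Finset (M × W)) : Finset (M × W) :=
  R ∪ univ.filter fun p => proposal P R p.1 = some p.2 ∧ held P R p.2 ≠ some p.1

noncomputable def rejected (k : ℕ) : Finset (M × W) :=
  (step P)^[k] ∅

variable {P}

theorem le_held (h : proposal P R m = some w) : (P.womenPref w).le (some m) (held P R w) :=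
  @Finset.le_max' _ (P.womenPref w) _ _ (by simp [proposers, h])

theorem none_le_held : (P.womenPref w).le none (held P R w) :=
  @Finset.le_max' _ (P.womenPref w) _ _ (by simp [proposers])

theorem proposal_eq_of_held_eq (h : held P R w = some m) : proposal P R m = some w := by
  have hmem := @Finset.max'_mem _ (P.womenPref w) (proposers P R w) ⟨none, by simp [proposers]⟩
  simp only [proposers, mem_filter, mem_univ, true_and] at hmem
  exact hmem m h

theorem held_injective {w' : W} (h : held P R w = some m) (h' : held P R w' = some m) :
    w = w' :=
  Option.some_injective _ ((proposal_eq_of_held_eq h).symm.trans (proposal_eq_of_held_eq h'))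

theorem subset_step : R ⊆ step P R :=
  subset_union_left

theorem mem_step :
    (m, w) ∈ step P R ↔ (m, w) ∈ R ∨ (proposal P R m = some w ∧ held P R w ≠ some m) := by
  simp [step]

theorem lt_held_of_mem_step (h : (m, w) ∈ step P R) (hR : (m, w) ∉ R) :
    (P.womenPref w).lt (some m) (held P R w) := by
  obtain ⟨hp, hne⟩ := (mem_step.1 h).resolve_left hR
  exact (P.womenPref w).lt_of_le_of_ne (le_held hp) (Ne.symm hne)

theorem proposal_step_eq_of_held_eq (h : held P R w = some m) :
    proposal P (step P R) m = some w := by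
  have hp := proposal_eq_of_held_eq h
  have hnot : (m, w) ∉ step P R := fun hs =>
    (mem_step.1 hs).elim (not_mem_of_proposal_eq hp) fun h' => h'.2 h
  refine (P.menPref m).le_antisymm _ _ (hp ▸ proposal_anti subset_step) ?_
  exact le_proposal (some_mem_available.2 hnot)

theorem held_le_held_step : (P.womenPref w).le (held P R w) (held P (step P R) w) := by
  cases h : held P R w with
  | none => exact none_le_held
  | some m => exact le_held (proposal_step_eq_of_held_eq h)

variable (P) in
theorem rejected_succ (k : ℕ) : rejected P (k + 1) = step P (rejected P k) :=
  Function.iterate_succ_apply' _ _ _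

variable (P) in
theorem monotone_rejected : Monotone (rejected P) :=
  monotone_nat_of_le_succ fun k => by rw [rejected_succ]; exact subset_step

theorem lt_held_of_mem_rejected {k : ℕ} (h : (m, w) ∈ rejected P (k + 1)) :
    (P.womenPref w).lt (some m) (held P (rejected P k) w) := by
  induction k with
  | zero => exact lt_held_of_mem_step h (by simp [rejected])
  | succ k ih =>
    rw [rejected_succ] at h
    by_cases hk : (m, w) ∈ rejected P (k + 1)
    · exact (P.womenPref w).lt_of_lt_of_le (ih hk) (rejected_succ P k ▸ held_le_held_step)
    · exact lt_held_of_mem_step h hk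

variable (P) in
theorem exists_step_rejected_eq : ∃ n, step P (rejected P n) = rejected P n := by
  obtain ⟨n, hn⟩ := WellFoundedGT.monotone_chain_condition ⟨rejected P, monotone_rejected P⟩
  exact ⟨n, (rejected_succ P n).symm.trans (hn (n + 1) n.le_succ).symm⟩

noncomputable def stopTime (P : Profile M W) : ℕ :=
  (exists_step_rejected_eq P).choose

variable (P) in
theorem step_rejected_stopTime : step P (rejected P (stopTime P)) = rejected P (stopTime P) :=
  (exists_step_rejected_eq P).choose_spec

noncomputable def matching (P : Profile M W) : Matching M W where
  menMatch := proposal P (rejected P (stopTime P))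
  womenMatch := held P (rejected P (stopTime P))
  consistent m w := by
    refine ⟨fun h => ?_, proposal_eq_of_held_eq⟩
    by_contra hne
    refine not_mem_of_proposal_eq h ?_
    rw [← step_rejected_stopTime]
    exact mem_step.2 (Or.inr ⟨h, hne⟩)

theorem stable_matching : Stable (matching P) P := by
  refine ⟨⟨fun m => none_le_proposal, fun w => none_le_held⟩, fun m w ⟨hm, hw⟩ => ?_⟩
  have hR := mem_of_lt_proposal hm
  rw [← step_rejected_stopTime, ← rejected_succ] at hR
  exact (P.womenPref w).lt_asymm (lt_held_of_mem_rejected hR) hw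

theorem menMatch_ne_of_mem_rejected {ν : Matching M W} (hν : Stable ν P) {k : ℕ} :
    ∀ {m : M} {w : W}, (m, w) ∈ rejected P k → ν.menMatch m ≠ some w := by
  induction k with
  | zero => simp [rejected]
  | succ k ih =>
    intro m w h hmw
    rw [rejected_succ] at h
    by_cases hk : (m, w) ∈ rejected P k
    · exact ih hk hmw
    have hlt := lt_held_of_mem_step h hk
    have hνw : ν.womenMatch w = some m := Matching.womenMatch_eq_some.2 hmw
    obtain ⟨m', hm'⟩ := exists_eq_some_of_none_le_of_lt (hνw ▸ hν.1.2 w) hlt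
    have hp := proposal_eq_of_held_eq hm'
    have hle : (P.menPref m').le (ν.menMatch m') (some w) :=
      hp ▸ le_proposal (mem_available.2 fun w' hw' hR => ih hR hw')
    have hne : ν.menMatch m' ≠ some w := fun h' => by
      obtain rfl := Matching.menMatch_injective h' hmw
      rw [hm'] at hlt
      exact (P.womenPref w).lt_irrefl _ hlt
    exact hν.2 m' w ⟨(P.menPref m').lt_of_le_of_ne hle hne, hνw ▸ hm' ▸ hlt⟩

theorem menOptimalStable_matching : MenOptimalStable (matching P) P := by
  refine ⟨stable_matching, fun ν hν m => (P.menPref m).not_lt.1 fun hlt => ?_⟩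
  obtain ⟨w, hw⟩ := exists_eq_some_of_none_le_of_lt none_le_proposal hlt
  exact menMatch_ne_of_mem_rejected hν (mem_of_lt_proposal (hw ▸ hlt)) hw

theorem exists_held_lt_or_blocks {ν : Matching M W} {k : ℕ} (hk : k ≤ stopTime P)
    (hmw : (m, w) ∈ rejected P (k + 1)) (hνm : ν.menMatch m = some w)
    (hIR : (P.womenPref w).le none (some m)) :
    ∃ m', held P (rejected P k) w = some m' ∧
      ((P.menPref m').lt ((matching P).menMatch m') (ν.menMatch m') ∨ Blocks m' w ν P) := by
  have hlt := lt_held_of_mem_rejected hmw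
  obtain ⟨m', hm'⟩ := exists_eq_some_of_none_le_of_lt hIR hlt
  refine ⟨m', hm', or_iff_not_imp_left.2 fun hm'ν => ?_⟩
  have hle : (P.menPref m').le (ν.menMatch m') (some w) :=
    proposal_eq_of_held_eq hm' ▸ (P.menPref m').le_trans _ _ _ ((P.menPref m').not_lt.1 hm'ν)
      (proposal_anti (monotone_rejected P hk))
  have hne : ν.menMatch m' ≠ some w := fun h' => by
    obtain rfl := Matching.menMatch_injective h' hνm
    rw [hm'] at hlt
    exact (P.womenPref w).lt_irrefl _ hlt
  refine ⟨(P.menPref m').lt_of_le_of_ne hle hne, ?_⟩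
  rw [Matching.womenMatch_eq_some.2 hνm, ← hm']
  exact hlt

/-- The blocking lemma of Gale and Sotomayor. Consider the last round in which deferred acceptance
rejects a gaining man from his `ν`-partner: at that round every woman `ν` gives to a gaining man
holds someone she prefers to that partner, and he must be a gaining man, or he blocks `ν` with her.
These holders are distinct and miss the man rejected in that round, which is too few gaining men. -/
theorem _root_.MenOptimalStable.exists_blocks {μ ν : Matching M W} (hμ : MenOptimalStable μ P)
    {m₀ : M} (hm₀ : (P.menPref m₀).lt (μ.menMatch m₀) (ν.menMatch m₀))
    (hIR : ∀ m w, (P.menPref m).lt (μ.menMatch m) (ν.menMatch m) → ν.menMatch m = some w →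
      (P.womenPref w).le none (some m)) :
    ∃ m w m', ¬ (P.menPref m).lt (μ.menMatch m) (ν.menMatch m) ∧
      (P.menPref m').lt (μ.menMatch m') (ν.menMatch m') ∧ ν.menMatch m' = some w ∧
      Blocks m w ν P := by
  obtain rfl := hμ.unique menOptimalStable_matching
  by_contra hcon
  let B := univ.filter fun m => (P.menPref m).lt ((matching P).menMatch m) (ν.menMatch m)
  let E := univ.filter fun p : M × W => p.1 ∈ B ∧ ν.menMatch p.1 = some p.2
  have hmemE : ∀ {m w}, (m, w) ∈ E ↔
      (P.menPref m).lt ((matching P).menMatch m) (ν.menMatch m) ∧ ν.menMatch m = some w := by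
    simp [E, B]
  have hE : E ⊆ rejected P (stopTime P) := fun ⟨m, w⟩ hp => by
    obtain ⟨hm, hw⟩ := hmemE.1 hp
    exact mem_of_lt_proposal (hw ▸ hm)
  obtain ⟨w₀, hw₀⟩ := exists_eq_some_of_none_le_of_lt none_le_proposal hm₀
  obtain ⟨k, hkN, hEk, hEk'⟩ := exists_last_entry rfl ⟨_, hmemE.2 ⟨hm₀, hw₀⟩⟩ hE
  obtain ⟨⟨ms, ws⟩, hsE, hs⟩ := not_subset.1 hEk'
  obtain ⟨hps, hhs⟩ := (mem_step.1 (rejected_succ P k ▸ hEk hsE)).resolve_left hs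
  have hheld : ∀ p ∈ E, ∃ m', held P (rejected P k) p.2 = some m' ∧ m' ∈ B.erase ms := by
    rintro ⟨m, w⟩ hp
    obtain ⟨hm, hw⟩ := hmemE.1 hp
    obtain ⟨m', hm', hgain⟩ := exists_held_lt_or_blocks hkN.le (hEk hp) hw (hIR m w hm hw)
    refine ⟨m', hm', mem_erase.2 ⟨?_, ?_⟩⟩
    · rintro rfl
      obtain rfl : w = ws := Option.some_injective _ ((proposal_eq_of_held_eq hm').symm.trans hps)
      exact hhs hm'
    · by_contra hm'B
      have hm'ν : ¬ (P.menPref m').lt ((matching P).menMatch m') (ν.menMatch m') := fun h =>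
        hm'B (mem_filter.2 ⟨mem_univ _, h⟩)
      exact hcon ⟨m', w, m, hm'ν, hm, hw, hgain.resolve_left hm'ν⟩
  have hBE : B.card ≤ E.card := calc
    B.card ≤ (E.image Prod.fst).card := card_le_card fun m hm => by
      obtain ⟨w, hw⟩ := exists_eq_some_of_none_le_of_lt none_le_proposal (mem_filter.1 hm).2
      exact mem_image.2 ⟨(m, w), hmemE.2 ⟨(mem_filter.1 hm).2, hw⟩, rfl⟩
    _ ≤ E.card := card_image_le
  have hEB : E.card ≤ (B.erase ms).card := calc
    E.card ≤ ((B.erase ms).image some).card := by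
      refine card_le_card_of_injOn (fun p => held P (rejected P k) p.2) (fun p hp => ?_) ?_
      · obtain ⟨m', hm', hm'B⟩ := hheld p hp
        exact mem_image.2 ⟨m', hm'B, hm'.symm⟩
      · rintro ⟨m, w⟩ hp ⟨m₁, w₁⟩ hp₁ (heq : held P _ w = held P _ w₁)
        obtain ⟨m', hm', -⟩ := hheld _ hp
        obtain rfl := held_injective hm' (heq ▸ hm')
        rw [Matching.menMatch_injective (hmemE.1 hp).2 (hmemE.1 hp₁).2]
    _ ≤ (B.erase ms).card := card_image_le
  have hB : ms ∈ B := (mem_filter.1 hsE).2.1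
  have := card_erase_of_mem hB
  have := card_pos.2 ⟨ms, hB⟩
  omega

end DeferredAcceptance

theorem mpda_menOptimalStable [Fintype M] [Fintype W] (P : Profile M W) :
    MenOptimalStable (mpda P) P := by
  have h : ∃ μ : Matching M W, MenOptimalStable μ P :=
    ⟨_, DeferredAcceptance.menOptimalStable_matching⟩
  rw [mpda, dif_pos h]
  exact h.choose_spec

/-- `Manipulation D φ P Q Sm Sw` unfolds to
`D.mem P ∧ D.mem Q ∧ CoalitionGain P Q (φ P) (φ Q) Sm Sw`. -/
def CoalitionGain (P Q : Profile M W) (μ ν : Matching M W) (Sm : Set M) (Sw : Set W) : Prop :=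
  (∀ m ∉ Sm, Q.menPref m = P.menPref m) ∧
  (∀ w ∉ Sw, Q.womenPref w = P.womenPref w) ∧
  (∀ m ∈ Sm, (P.menPref m).lt (μ.menMatch m) (ν.menMatch m)) ∧
  (∀ w ∈ Sw, (P.womenPref w).lt (μ.womenMatch w) (ν.womenMatch w))

namespace CoalitionGain

variable {P Q : Profile M W} {μ ν : Matching M W} {Sm : Set M} {Sw : Set W}

theorem menMatch_le [Fintype M] [Fintype W] (h : CoalitionGain P Q μ ν Sm Sw)
    (hμ : MenOptimalStable μ P) (hν : Stable ν Q) (m : M) :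
    (P.menPref m).le (ν.menMatch m) (μ.menMatch m) := by
  obtain ⟨hQm, hQw, hSm, hSw⟩ := h
  have hpartner : ∀ m w, (P.menPref m).lt (μ.menMatch m) (ν.menMatch m) →
      ν.menMatch m = some w → w ∉ Sw ∧ (P.womenPref w).le none (some m) := by
    intro m w hm hw
    have hνw := Matching.womenMatch_eq_some.2 hw
    have hwS : w ∉ Sw := fun hwS =>
      (P.womenPref w).lt_asymm (hμ.1.lt_womenMatch (hw ▸ hm)) (hνw ▸ hSw w hwS)
    refine ⟨hwS, ?_⟩
    rw [← hQw w hwS, ← hνw]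
    exact hν.1.2 w
  refine (P.menPref m).not_lt.1 fun hm => ?_
  obtain ⟨m₁, w, m', hm₁, hm', hw, hblocks⟩ :=
    hμ.exists_blocks hm fun m w hm hw => (hpartner m w hm hw).2
  apply hν.2 m₁ w
  rw [Blocks, hQm m₁ fun h => hm₁ (hSm m₁ h), hQw w (hpartner m' w hm' hw).1]
  exact hblocks

theorem menPref_eq (h : CoalitionGain P Q μ ν Sm Sw)
    (hle : ∀ m, (P.menPref m).le (ν.menMatch m) (μ.menMatch m)) (m : M) :
    Q.menPref m = P.menPref m :=
  h.1 m fun hm => (P.menPref m).not_lt.2 (hle m) (h.2.2.1 m hm)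

/-- Once no man gains, the women of the coalition cannot have broken the stability of `μ`: each of
them ranks her `ν`-partner first among the agents involved, at `P` and at `Q`, so by top
dominance she cannot reverse at `Q` the comparisons below him that make `μ` stable at `P`. -/
theorem stable_of_menMatch_le {D : Domain M W} (hTD : TopDominanceWomen D) (hP : D.mem P)
    (hQ : D.mem Q) (h : CoalitionGain P Q μ ν Sm Sw) (hμ : Stable μ P) (hν : Stable ν Q)
    (hle : ∀ m, (P.menPref m).le (ν.menMatch m) (μ.menMatch m)) : Stable μ Q := by
  have hQm := h.menPref_eq hle
  obtain ⟨-, hQw, -, hSw⟩ := h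
  have hpartner : ∀ w ∈ Sw, ∃ m', ν.womenMatch w = some m' ∧
      (P.womenPref w).lt (μ.womenMatch w) (some m') := fun w hw => by
    obtain ⟨m', hm'⟩ := exists_eq_some_of_none_le_of_lt (hμ.1.2 w) (hSw w hw)
    exact ⟨m', hm', hm' ▸ hSw w hw⟩
  have hIR : ∀ w, (Q.womenPref w).le none (μ.womenMatch w) := by
    intro w
    by_cases hw : w ∈ Sw
    · obtain ⟨m', hνw, hlt⟩ := hpartner w hw
      refine (Q.womenPref w).not_lt.1 fun hQlt => hTD w m' (μ.womenMatch w) none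
        ⟨P.womenPref w, hP.2 w, hlt, (P.womenPref w).lt_of_le_of_ne (hμ.1.2 w) ?_, hμ.1.2 w⟩
        ⟨Q.womenPref w, hQ.2 w, (Q.womenPref w).lt_of_le_of_ne (hνw ▸ hν.1.2 w) (by simp),
          hQlt, (Q.womenPref w).le_refl none⟩
      intro h0
      rw [← h0] at hQlt
      exact (Q.womenPref w).lt_irrefl none hQlt
    · rw [hQw w hw]
      exact hμ.1.2 w
  refine ⟨⟨fun m => hQm m ▸ hμ.1.1 m, hIR⟩, fun m w ⟨hm, hw⟩ => ?_⟩
  rw [hQm m] at hm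
  by_cases hwS : w ∈ Sw
  · obtain ⟨m', hνw, hlt⟩ := hpartner w hwS
    have hνm : (Q.menPref m).lt (ν.menMatch m) (some w) := by
      rw [hQm m]
      exact (P.menPref m).lt_of_le_of_lt (hle m) hm
    exact hTD w m' (μ.womenMatch w) (some m)
      ⟨P.womenPref w, hP.2 w, hlt, hμ.lt_womenMatch hm, hμ.1.2 w⟩
      ⟨Q.womenPref w, hQ.2 w, hνw ▸ hν.lt_womenMatch hνm, hw,
        (Q.womenPref w).le_of_lt ((Q.womenPref w).lt_of_le_of_lt (hIR w) hw)⟩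
  · exact hμ.2 m w ⟨hm, hQw w hwS ▸ hw⟩

end CoalitionGain

theorem mpda_gsp_of_top_dominance_general [Fintype M] [Fintype W] (D : Domain M W)
    (hTD : TopDominanceWomen D) :
    StableOn D mpda ∧ GroupStrategyProofOn D mpda := by
  refine ⟨fun P _ => (mpda_menOptimalStable P).1, ?_⟩
  rintro ⟨P, Q, Sm, Sw, hS, hman⟩
  obtain ⟨hP, hQ, hgain⟩ : D.mem P ∧ D.mem Q ∧ CoalitionGain P Q (mpda P) (mpda Q) Sm Sw := hman
  have hμ := mpda_menOptimalStable P
  have hν := mpda_menOptimalStable Q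
  have hle := hgain.menMatch_le hμ hν.1
  have hμQ := hgain.stable_of_menMatch_le hTD hP hQ hμ.1 hν.1 hle
  have heq : mpda Q = mpda P := Matching.ext_menMatch fun m =>
    (P.menPref m).le_antisymm _ _ (hle m) (hgain.menPref_eq hle m ▸ hν.2 _ hμQ m)
  obtain ⟨-, -, hSm, hSw⟩ := hgain
  rw [heq] at hSm hSw
  rcases hS with ⟨m, hm⟩ | ⟨w, hw⟩
  · exact (P.menPref m).lt_irrefl _ (hSm m hm)
  · exact (P.womenPref w).lt_irrefl _ (hSw w hw)

/-- on a domain satisfying top dominance for women, the MPDA rule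
is stable and group strategy-proof. -/
theorem mpda_gsp_of_top_dominance [Fintype M] [Fintype W]
    [DecidableEq M] [DecidableEq W] (D : Domain M W)
    (hTD : TopDominanceWomen D) :
    StableOn D mpda ∧ GroupStrategyProofOn D mpda :=
  mpda_gsp_of_top_dominance_general D hTD
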